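/- arXiv:1612.06965 — 4 statements merged into one kernel-verified Lean document; each statement's English description precedes it below -/
import Mathlib

section
/- Let φ: [0, T] → ℝ be continuously differentiable with φ(t) > 0 and |φ'(t)| ≤ 2 φ(t)^{3/2} for all t in [0, T]. Set δ = φ(0)^{1/2}. Then for all t in [0, T], φ(t) ≥ δ²/(1 + δt)², and for all t in [0, T] with t < 1/δ, φ(t) ≤ δ²/(1 - δt)². -/
theorem self_concordant_ode_bounds (T : ℝ) (hT : 0 ≤ T) (φ φ' : ℝ → ℝ)
    (hderiv : ∀ t ∈ Set.Icc (0 : ℝ) T, HasDerivAt φ (φ' t) t)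
    (hcont : ContinuousOn φ' (Set.Icc (0 : ℝ) T))
    (hpos : ∀ t ∈ Set.Icc (0 : ℝ) T, 0 < φ t)
    (hsc : ∀ t ∈ Set.Icc (0 : ℝ) T, |φ' t| ≤ 2 * φ t ^ ((3 : ℝ) / 2)) :
    (∀ t ∈ Set.Icc (0 : ℝ) T,
        φ t ≥ Real.sqrt (φ 0) ^ 2 / (1 + Real.sqrt (φ 0) * t) ^ 2) ∧
      (∀ t ∈ Set.Icc (0 : ℝ) T, t < 1 / Real.sqrt (φ 0) →
        φ t ≤ Real.sqrt (φ 0) ^ 2 / (1 - Real.sqrt (φ 0) * t) ^ 2) := by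
  set s := Set.Icc (0 : ℝ) T with hs
  have h0 : (0 : ℝ) ∈ s := ⟨le_refl 0, hT⟩
  set g : ℝ → ℝ := fun t => φ t ^ (-(1 : ℝ) / 2) with hg
  set g' : ℝ → ℝ := fun t => φ' t * (-(1 : ℝ) / 2) * φ t ^ ((-(1 : ℝ) / 2) - 1) with hg'
  have hgderiv : ∀ t ∈ s, HasDerivWithinAt g (g' t) s t := fun t ht =>
    (((hderiv t ht).rpow_const (Or.inl (hpos t ht).ne'))).hasDerivWithinAt
  have hbound : ∀ t ∈ s, ‖g' t‖ ≤ 1 := by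
    intro t ht
    have hφ := hpos t ht
    have hsc' := hsc t ht
    have hrw : φ t ^ ((-(1 : ℝ) / 2) - 1) = (φ t ^ ((3 : ℝ) / 2))⁻¹ := by
      rw [← Real.rpow_neg hφ.le]; norm_num
    have hp32 : 0 < φ t ^ ((3 : ℝ) / 2) := Real.rpow_pos_of_pos hφ _
    simp only [hg', Real.norm_eq_abs, hrw]
    rw [abs_mul, abs_mul]
    have : |φ' t| * |(-(1:ℝ)/2)| ≤ (2 * φ t ^ ((3 : ℝ) / 2)) * (1/2) := by
      rw [abs_of_nonpos (by norm_num : (-(1:ℝ)/2) ≤ 0)]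
      nlinarith [abs_nonneg (φ' t)]
    calc |φ' t| * |(-(1:ℝ)/2)| * |(φ t ^ ((3:ℝ)/2))⁻¹|
        ≤ (2 * φ t ^ ((3 : ℝ) / 2)) * (1/2) * (φ t ^ ((3:ℝ)/2))⁻¹ := by
          rw [abs_of_pos (inv_pos.mpr hp32)]
          exact mul_le_mul_of_nonneg_right this (inv_pos.mpr hp32).le
      _ = 1 := by field_simp
  have key : ∀ t ∈ s, |g t - g 0| ≤ t := by
    intro t ht
    have := (convex_Icc (0:ℝ) T).norm_image_sub_le_of_norm_hasDerivWithin_le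
      hgderiv hbound h0 ht
    simpa [Real.norm_eq_abs, abs_of_nonneg ht.1] using this
  have hφ0 : 0 < φ 0 := hpos 0 h0
  have hδ : 0 < Real.sqrt (φ 0) := Real.sqrt_pos.mpr hφ0
  set δ := Real.sqrt (φ 0) with hδdef
  have hg0 : g 0 = δ⁻¹ := by
    rw [hg]
    simp only
    rw [show (-(1:ℝ)/2) = -(1/2) by norm_num, Real.rpow_neg hφ0.le,
      ← Real.sqrt_eq_rpow]
  have hgt : ∀ t ∈ s, g t = (Real.sqrt (φ t))⁻¹ := by
    intro t ht
    have hφ := (hpos t ht).le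
    rw [hg]
    simp only
    rw [show (-(1:ℝ)/2) = -(1/2) by norm_num, Real.rpow_neg hφ, ← Real.sqrt_eq_rpow]
  constructor
  · intro t ht
    have hφt := hpos t ht
    have hat : 0 < Real.sqrt (φ t) := Real.sqrt_pos.mpr hφt
    have h1 : g t ≤ g 0 + t := by
      have := (abs_le.mp (key t ht)).2; linarith
    rw [hgt t ht, hg0] at h1
    set a := Real.sqrt (φ t)
    have hden : 0 < 1 + δ * t := by nlinarith [ht.1]
    -- a⁻¹ ≤ δ⁻¹ + t = (1 + δ t)/δ  ⇒  a ≥ δ/(1+δt)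
    have ha : δ / (1 + δ * t) ≤ a := by
      rw [div_le_iff₀ hden]
      have h2 : 1 ≤ a * (δ⁻¹ + t) := by
        calc (1:ℝ) = a * a⁻¹ := (mul_inv_cancel₀ hat.ne').symm
          _ ≤ a * (δ⁻¹ + t) := mul_le_mul_of_nonneg_left h1 hat.le
      nlinarith [mul_inv_cancel₀ hat.ne', mul_inv_cancel₀ hδ.ne', hδ, hat,
        mul_le_mul_of_nonneg_left h1 (mul_pos hat hδ).le]
    have hsq : (δ / (1 + δ * t)) ^ 2 ≤ a ^ 2 :=
      pow_le_pow_left₀ (by positivity) ha 2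
    have haφ : a ^ 2 = φ t := Real.sq_sqrt hφt.le
    rw [ge_iff_le]
    calc δ ^ 2 / (1 + δ * t) ^ 2 = (δ / (1 + δ * t)) ^ 2 := (div_pow _ _ _).symm
      _ ≤ a ^ 2 := hsq
      _ = φ t := haφ
  · intro t ht htlt
    have hφt := hpos t ht
    have hat : 0 < Real.sqrt (φ t) := Real.sqrt_pos.mpr hφt
    have h1 : g 0 - t ≤ g t := by
      have := (abs_le.mp (key t ht)).1; linarith
    rw [hgt t ht, hg0] at h1
    set a := Real.sqrt (φ t)
    have hden : 0 < 1 - δ * t := by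
      have : δ * t < δ * (1/δ) := mul_lt_mul_of_pos_left htlt hδ
      rw [mul_one_div, div_self hδ.ne'] at this
      linarith
    -- δ⁻¹ - t ≤ a⁻¹ ⇒ a ≤ δ/(1-δt)
    have ha : a ≤ δ / (1 - δ * t) := by
      rw [le_div_iff₀ hden]
      have h2 : a * (δ⁻¹ - t) ≤ a * a⁻¹ := mul_le_mul_of_nonneg_left h1 hat.le
      rw [mul_inv_cancel₀ hat.ne'] at h2
      nlinarith [mul_inv_cancel₀ hat.ne', mul_inv_cancel₀ hδ.ne', hδ, hat,
        mul_le_mul_of_nonneg_left h1 (mul_pos hat hδ).le]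
    have hsq : a ^ 2 ≤ (δ / (1 - δ * t)) ^ 2 := pow_le_pow_left₀ hat.le ha 2
    have haφ : a ^ 2 = φ t := Real.sq_sqrt hφt.le
    calc φ t = a ^ 2 := haφ.symm
      _ ≤ (δ / (1 - δ * t)) ^ 2 := hsq
      _ = δ ^ 2 / (1 - δ * t) ^ 2 := div_pow _ _ _
end

section
/- Let f: ℝⁿ → ℝ be standard self-concordant (|∇³f(x)[h,h,h]| ≤ 2(∇²f(x)[h,h])^{3/2} for all x, h) and strictly convex with positive-definite Hessian, let x ∈ ℝⁿ, d ≠ 0, and δ = √(dᵀ∇²f(x)d). Then for all t ≥ 0: f(x+td) ≥ f(x) + t∇f(x)ᵀd + δt - log(1 + δt). -/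
/-!
Restrict `f` to the ray `φ t = f (x + t • d)`. Self-concordance reads `|φ'''| ≤ 2 φ'' ^ (3/2)`,
which says exactly that `t ↦ φ'' t ^ (-1/2)` grows with slope at most `1`. Hence
`φ'' t ^ (-1/2) ≤ 1/δ + t`, i.e. `φ'' t ≥ δ² / (1 + δ t)²`, and integrating this twice from `0`
gives the bound.
-/

open Real
open scoped RealInnerProductSpace

theorem le_of_hasDerivAt_le_of_nonneg {F G F' G' : ℝ → ℝ}
    (hF : ∀ s ≥ 0, HasDerivAt F (F' s) s) (hG : ∀ s ≥ 0, HasDerivAt G (G' s) s)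
    (h0 : F 0 ≤ G 0) (hle : ∀ s ≥ 0, F' s ≤ G' s) {t : ℝ} (ht : 0 ≤ t) : F t ≤ G t :=
  image_le_of_deriv_right_le_deriv_boundary
    (fun s hs => (hF s hs.1).continuousAt.continuousWithinAt)
    (fun s hs => (hF s hs.1).hasDerivWithinAt) h0
    (fun s hs => (hG s hs.1).continuousAt.continuousWithinAt)
    (fun s hs => (hG s hs.1).hasDerivWithinAt) (fun s hs => hle s hs.1) ⟨ht, le_rfl⟩

theorem hasDerivAt_iteratedFDeriv_line {E F : Type*} [NormedAddCommGroup E] [NormedSpace ℝ E]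
    [NormedAddCommGroup F] [NormedSpace ℝ F] {f : E → F} {k : ℕ} (hf : ContDiff ℝ (k + 1) f)
    (x d : E) (t : ℝ) :
    HasDerivAt (fun s : ℝ => iteratedFDeriv ℝ k f (x + s • d) fun _ => d)
      (iteratedFDeriv ℝ (k + 1) f (x + t • d) fun _ => d) t := by
  have hline : HasDerivAt (fun s : ℝ => x + s • d) d t := by
    simpa using ((hasDerivAt_id t).smul_const d).const_add x
  have hdiff : Differentiable ℝ (iteratedFDeriv ℝ k f) :=
    hf.differentiable_iteratedFDeriv (mod_cast Nat.lt_succ_self k)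
  exact (ContinuousMultilinearMap.apply ℝ (fun _ : Fin k => E) F fun _ => d).hasFDerivAt
    |>.comp_hasDerivAt t ((hdiff _).hasFDerivAt.comp_hasDerivAt t hline)

namespace SelfConcordant

variable {φ φ' φ'' φ''' : ℝ → ℝ}

theorem rpow_neg_half_le_add (hφ'' : ∀ s ≥ 0, HasDerivAt φ'' (φ''' s) s)
    (hpos : ∀ s ≥ 0, 0 < φ'' s) (hsc : ∀ s ≥ 0, |φ''' s| ≤ 2 * φ'' s ^ ((3 : ℝ) / 2))
    {t : ℝ} (ht : 0 ≤ t) : φ'' t ^ (-(1 / 2) : ℝ) ≤ φ'' 0 ^ (-(1 / 2) : ℝ) + t := by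
  refine le_of_hasDerivAt_le_of_nonneg (G' := fun _ => 1)
    (fun s hs => (hφ'' s hs).rpow_const (Or.inl (hpos s hs).ne'))
    (fun s _ => (hasDerivAt_id s).const_add _) (by simp) (fun s hs => ?_) ht
  have hcancel : φ'' s ^ (-(1 / 2) - 1 : ℝ) * φ'' s ^ ((3 : ℝ) / 2) = 1 := by
    rw [← rpow_add (hpos s hs)]; norm_num
  have hpow := rpow_pos_of_pos (hpos s hs) (-(1 / 2) - 1 : ℝ)
  nlinarith [neg_abs_le (φ''' s), hsc s hs]

theorem sq_div_sq_le_second_deriv (hφ'' : ∀ s ≥ 0, HasDerivAt φ'' (φ''' s) s)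
    (hpos : ∀ s ≥ 0, 0 < φ'' s) (hsc : ∀ s ≥ 0, |φ''' s| ≤ 2 * φ'' s ^ ((3 : ℝ) / 2))
    {δ : ℝ} (hδ : 0 < δ) (hδ0 : φ'' 0 = δ ^ 2) {t : ℝ} (ht : 0 ≤ t) :
    δ ^ 2 / (1 + δ * t) ^ 2 ≤ φ'' t := by
  have key := rpow_neg_half_le_add hφ'' hpos hsc ht
  rw [rpow_neg (hpos t ht).le, rpow_neg (hpos 0 le_rfl).le, ← sqrt_eq_rpow, ← sqrt_eq_rpow,
    hδ0, sqrt_sq hδ.le] at key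
  have hsum : δ⁻¹ + t = (1 + δ * t) / δ := by field_simp
  rw [hsum, inv_le_comm₀ (sqrt_pos.2 (hpos t ht)) (by positivity), inv_div] at key
  rw [← div_pow, ← le_sqrt (by positivity) (hpos t ht).le]
  exact key

section

variable (hφ' : ∀ s ≥ 0, HasDerivAt φ' (φ'' s) s)
  (hφ'' : ∀ s ≥ 0, HasDerivAt φ'' (φ''' s) s) (hpos : ∀ s ≥ 0, 0 < φ'' s)
  (hsc : ∀ s ≥ 0, |φ''' s| ≤ 2 * φ'' s ^ ((3 : ℝ) / 2))
  {δ : ℝ} (hδ : 0 < δ) (hδ0 : φ'' 0 = δ ^ 2)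
include hφ' hφ'' hpos hsc hδ hδ0

theorem add_sub_div_le_first_deriv {t : ℝ} (ht : 0 ≤ t) :
    φ' 0 + δ - δ / (1 + δ * t) ≤ φ' t := by
  have hden : ∀ s ≥ 0, 0 < 1 + δ * s := fun s hs => by positivity
  refine le_of_hasDerivAt_le_of_nonneg (F := fun s => φ' 0 + δ - δ / (1 + δ * s))
    (F' := fun s => δ ^ 2 / (1 + δ * s) ^ 2)
    (fun s hs => ?_) hφ' (by simp)
    (fun s hs => sq_div_sq_le_second_deriv hφ'' hpos hsc hδ hδ0 hs) ht
  have hlin := ((hasDerivAt_id' s).const_mul δ).const_add 1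
  exact ((hasDerivAt_const s δ).div hlin (hden s hs).ne' |>.const_sub (φ' 0 + δ)).congr_deriv
    (by ring)

theorem add_sub_log_le (hφ : ∀ s ≥ 0, HasDerivAt φ (φ' s) s) {t : ℝ} (ht : 0 ≤ t) :
    φ 0 + t * φ' 0 + δ * t - log (1 + δ * t) ≤ φ t := by
  have hden : ∀ s ≥ 0, 0 < 1 + δ * s := fun s hs => by positivity
  refine le_of_hasDerivAt_le_of_nonneg
    (F := fun s => φ 0 + s * φ' 0 + δ * s - log (1 + δ * s))
    (F' := fun s => φ' 0 + δ - δ / (1 + δ * s))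
    (fun s hs => ?_) hφ (by simp)
    (fun s hs => add_sub_div_le_first_deriv hφ' hφ'' hpos hsc hδ hδ0 hs) ht
  have hlin := ((hasDerivAt_id' s).const_mul δ).const_add 1
  exact ((((hasDerivAt_id' s).mul_const (φ' 0)).const_add (φ 0)).add
    ((hasDerivAt_id' s).const_mul δ) |>.sub (hlin.log (hden s hs).ne')).congr_deriv (by ring)

end

end SelfConcordant

theorem self_concordant_lower_bound {n : ℕ}
    (f : EuclideanSpace ℝ (Fin n) → ℝ) (hf : ContDiff ℝ 3 f)
    (hsc : ∀ (x h : EuclideanSpace ℝ (Fin n)),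
      |iteratedFDeriv ℝ 3 f x ![h, h, h]| ≤
        2 * (iteratedFDeriv ℝ 2 f x ![h, h]) ^ ((3 : ℝ) / 2))
    (hconv : ∀ (x h : EuclideanSpace ℝ (Fin n)), h ≠ 0 →
      0 < iteratedFDeriv ℝ 2 f x ![h, h])
    (x d : EuclideanSpace ℝ (Fin n)) (hd : d ≠ 0) (δ : ℝ)
    (hδ : δ = Real.sqrt (iteratedFDeriv ℝ 2 f x ![d, d])) :
    ∀ t : ℝ, 0 ≤ t →
      f (x + t • d) ≥ f x + t * ⟪gradient f x, d⟫ + δ * t - Real.log (1 + δ * t) := by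
  intro t ht
  set D : ℕ → ℝ → ℝ := fun k s => iteratedFDeriv ℝ k f (x + s • d) fun _ => d
  have hD : ∀ k < 3, ∀ s ≥ 0, HasDerivAt (D k) (D (k + 1) s) s := fun k hk s _ =>
    hasDerivAt_iteratedFDeriv_line (hf.of_le (mod_cast hk)) x d s
  have hvec2 : ![d, d] = fun _ => d := by ext i; fin_cases i <;> rfl
  have hvec3 : ![d, d, d] = fun _ => d := by ext i; fin_cases i <;> rfl
  have hpos : ∀ s ≥ 0, 0 < D 2 s := fun s _ => by simpa [D, hvec2] using hconv (x + s • d) d hd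
  have hδ0 : D 2 0 = δ ^ 2 := by
    rw [hδ, sq_sqrt (hconv x d hd).le]; simp [D, hvec2]
  have hgrad : ⟪gradient f x, d⟫ = D 1 0 := by
    simp [D, iteratedFDeriv_one_apply, gradient, InnerProductSpace.toDual_symm_apply]
  have hray := SelfConcordant.add_sub_log_le (hD 1 (by norm_num)) (hD 2 (by norm_num)) hpos
    (fun s _ => by simp only [D, Nat.reduceAdd]; rw [← hvec3, ← hvec2]; exact hsc _ d)
    (hδ ▸ sqrt_pos.2 (hconv x d hd)) hδ0 (hD 0 (by norm_num)) ht
  simpa [D, hgrad] using hray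
end

section
/- Suppose f is standard self-concordant and strictly convex, x ∈ ℝⁿ, H is positive definite, d = -H∇f(x) ≠ 0, ρ = ∇f(x)ᵀH∇f(x), δ = √(dᵀ∇²f(x)d), η = ρ/δ, and t = ρ/((ρ+δ)δ). Then f(x + t d) ≤ f(x) - (η - log(1+η)). -/
/-!
Restrict `f` to the line `φ s = f (x + s • d)` and put `δ = √(φ'' 0)`. Self-concordance says
exactly that `(φ'')^(-1/2)` has derivative at least `-1`, so `φ'' s ≤ (δ / (1 - s δ))²`, the
second derivative of `ω s = - s δ - log (1 - s δ)`. Integrating twice from `0`, where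
`φ' 0 = ⟪∇f x, d⟫ = -ρ`, gives `f (x + t • d) ≤ f x - t ρ + ω t` for `t δ < 1`. The step
`t = ρ / ((ρ + δ) δ)` has `t (ρ + δ) = η` and `1 - t δ = 1 / (1 + η)`, which turns the bound into
`f x - (η - log (1 + η))`.
-/

open Real Set
open scoped RealInnerProductSpace

theorem le_of_hasDerivAt_le {u v u' v' : ℝ → ℝ} {a b : ℝ}
    (hu : ∀ s ∈ Icc a b, HasDerivAt u (u' s) s) (hv : ∀ s ∈ Icc a b, HasDerivAt v (v' s) s)
    (ha : u a ≤ v a) (h : ∀ s ∈ Ico a b, u' s ≤ v' s) : ∀ ⦃s⦄, s ∈ Icc a b → u s ≤ v s :=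
  image_le_of_deriv_right_le_deriv_boundary
    (fun s hs => (hu s hs).continuousAt.continuousWithinAt)
    (fun s hs => (hu s (Ico_subset_Icc_self hs)).hasDerivWithinAt) ha
    (fun s hs => (hv s hs).continuousAt.continuousWithinAt)
    (fun s hs => (hv s (Ico_subset_Icc_self hs)).hasDerivWithinAt) h

section SelfConcordant

variable {φ φ' φ'' φ''' : ℝ → ℝ}

theorem inv_sqrt_sub_le_inv_sqrt (h3 : ∀ s, HasDerivAt φ'' (φ''' s) s) (hpos : ∀ s, 0 < φ'' s)
    (hsc : ∀ s, |φ''' s| ≤ 2 * φ'' s ^ ((3 : ℝ) / 2)) {s : ℝ} (hs : 0 ≤ s) :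
    (√(φ'' 0))⁻¹ - s ≤ (√(φ'' s))⁻¹ := by
  have hderiv (r : ℝ) : HasDerivAt (fun r => (√(φ'' r))⁻¹)
      (-(φ''' r / (2 * √(φ'' r))) / √(φ'' r) ^ 2) r :=
    ((h3 r).sqrt (hpos r).ne').inv (sqrt_pos.2 (hpos r)).ne'
  have hbound (r : ℝ) : -1 ≤ -(φ''' r / (2 * √(φ'' r))) / √(φ'' r) ^ 2 := by
    have hr := sqrt_pos.2 (hpos r)
    have h32 : φ'' r ^ ((3 : ℝ) / 2) = √(φ'' r) ^ 3 := by
      rw [sqrt_eq_rpow, ← rpow_natCast, ← rpow_mul (hpos r).le]; norm_num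
    have := (abs_le.1 (hsc r)).2
    rw [h32] at this
    rw [neg_div, neg_le_neg_iff, div_div, div_le_one (by positivity)]
    nlinarith
  refine le_of_hasDerivAt_le (u' := fun _ => -1) (fun r _ => ?_) (fun r _ => hderiv r)
    (by rw [sub_zero]) (fun r _ => hbound r) ⟨hs, le_rfl⟩
  simpa using (hasDerivAt_id r).const_sub (√(φ'' 0))⁻¹

theorem le_sq_div_one_sub_mul (h3 : ∀ s, HasDerivAt φ'' (φ''' s) s) (hpos : ∀ s, 0 < φ'' s)
    (hsc : ∀ s, |φ''' s| ≤ 2 * φ'' s ^ ((3 : ℝ) / 2)) {s : ℝ} (hs0 : 0 ≤ s)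
    (hs : s * √(φ'' 0) < 1) :
    φ'' s ≤ (√(φ'' 0) / (1 - s * √(φ'' 0))) ^ 2 := by
  have hδ := sqrt_pos.2 (hpos 0)
  have hsub : 0 < 1 - s * √(φ'' 0) := by linarith
  have h := inv_sqrt_sub_le_inv_sqrt h3 hpos hsc hs0
  have hpos' : 0 < (√(φ'' 0))⁻¹ - s := by
    rw [show (√(φ'' 0))⁻¹ - s = (1 - s * √(φ'' 0)) / √(φ'' 0) by field_simp]
    positivity
  rw [← sq_sqrt (hpos s).le, show √(φ'' 0) / (1 - s * √(φ'' 0)) = ((√(φ'' 0))⁻¹ - s)⁻¹ by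
    field_simp]
  gcongr
  exact (le_inv_comm₀ hpos' (sqrt_pos.2 (hpos s))).1 h

theorem le_add_mul_sub_log_one_sub (h1 : ∀ s, HasDerivAt φ (φ' s) s)
    (h2 : ∀ s, HasDerivAt φ' (φ'' s) s) (h3 : ∀ s, HasDerivAt φ'' (φ''' s) s)
    (hpos : ∀ s, 0 < φ'' s) (hsc : ∀ s, |φ''' s| ≤ 2 * φ'' s ^ ((3 : ℝ) / 2))
    {t : ℝ} (ht0 : 0 ≤ t) (ht : t * √(φ'' 0) < 1) :
    φ t ≤ φ 0 + φ' 0 * t - t * √(φ'' 0) - log (1 - t * √(φ'' 0)) := by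
  set δ := √(φ'' 0)
  have hsub {s : ℝ} (hs : s ∈ Icc 0 t) : 0 < 1 - s * δ := by
    nlinarith [hs.2, sqrt_nonneg (φ'' 0)]
  have hline (s : ℝ) : HasDerivAt (fun s => 1 - s * δ) (-δ) s := by
    simpa using ((hasDerivAt_id s).mul_const δ).const_sub 1
  have hslope : ∀ s ∈ Icc 0 t, φ' s ≤ φ' 0 + (δ / (1 - s * δ) - δ) := by
    refine le_of_hasDerivAt_le (fun s _ => h2 s) (fun s hs => ?_) (by simp) fun s hs =>
      le_sq_div_one_sub_mul h3 hpos hsc hs.1 (by nlinarith [hs.2, sqrt_nonneg (φ'' 0)])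
    refine ((((hasDerivAt_const s δ).div (hline s) (hsub hs).ne').sub_const δ).const_add
      (φ' 0)).congr_deriv ?_
    field_simp
    ring
  refine le_of_hasDerivAt_le (v := fun s => φ 0 + φ' 0 * s - s * δ - log (1 - s * δ))
    (fun s _ => h1 s) (fun s hs => ?_) (by simp) (fun s hs => hslope s (Ico_subset_Icc_self hs))
    ⟨ht0, le_rfl⟩
  refine (((((hasDerivAt_id s).const_mul (φ' 0)).const_add (φ 0)).sub
    ((hasDerivAt_id s).mul_const δ)).sub ((hline s).log (hsub hs).ne')).congr_deriv ?_
  field_simp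
  ring

end SelfConcordant

section Line

variable {E F : Type*} [NormedAddCommGroup E] [NormedSpace ℝ E] [NormedAddCommGroup F]
  [NormedSpace ℝ F]

theorem ContDiffAt.hasDerivAt_iteratedFDeriv_add_smul {f : E → F} {x y : E} {t : ℝ} {k : ℕ}
    (hf : ContDiffAt ℝ (k + 1) f (x + t • y)) :
    HasDerivAt (fun s : ℝ => iteratedFDeriv ℝ k f (x + s • y) (fun _ => y))
      (iteratedFDeriv ℝ (k + 1) f (x + t • y) (fun _ => y)) t := by
  rw [← hf.deriv_fderiv_add_smul]
  refine DifferentiableAt.hasDerivAt ?_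
  have hD : DifferentiableAt ℝ (iteratedFDeriv ℝ k f) (x + t • y) :=
    hf.differentiableAt_iteratedFDeriv (by norm_cast; exact lt_add_one k)
  have hline : DifferentiableAt ℝ (fun s : ℝ => x + s • y) t := by fun_prop
  exact (hD.continuousMultilinear_apply_const _).comp t hline

theorem le_sub_log_of_selfConcordant_along {f : E → ℝ} (hf : ContDiff ℝ 3 f) {x d : E}
    (hsc : ∀ y, |iteratedFDeriv ℝ 3 f y ![d, d, d]| ≤
      2 * (iteratedFDeriv ℝ 2 f y ![d, d]) ^ ((3 : ℝ) / 2))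
    (hpos : ∀ y, 0 < iteratedFDeriv ℝ 2 f y ![d, d]) {t : ℝ} (ht0 : 0 ≤ t)
    (ht : t * √(iteratedFDeriv ℝ 2 f x ![d, d]) < 1) :
    f (x + t • d) ≤ f x + fderiv ℝ f x d * t - t * √(iteratedFDeriv ℝ 2 f x ![d, d]) -
      log (1 - t * √(iteratedFDeriv ℝ 2 f x ![d, d])) := by
  have hderiv (k : ℕ) (hk : k < 3) (s : ℝ) :
      HasDerivAt (fun s : ℝ => iteratedFDeriv ℝ k f (x + s • d) (fun _ => d))
        (iteratedFDeriv ℝ (k + 1) f (x + s • d) (fun _ => d)) s :=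
    (hf.contDiffAt.of_le (by norm_cast)).hasDerivAt_iteratedFDeriv_add_smul
  simp only [Matrix.vec_single_eq_const, Matrix.vecCons_const] at hsc hpos ht ⊢
  have := le_add_mul_sub_log_one_sub (φ := fun s => f (x + s • d))
    (φ' := fun s => iteratedFDeriv ℝ 1 f (x + s • d) (fun _ => d))
    (φ'' := fun s => iteratedFDeriv ℝ 2 f (x + s • d) (fun _ => d))
    (φ''' := fun s => iteratedFDeriv ℝ 3 f (x + s • d) (fun _ => d))
    (by simpa using hderiv 0 (by norm_num)) (hderiv 1 (by norm_num)) (hderiv 2 (by norm_num))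
    (fun s => hpos _) (fun s => hsc _) ht0 (by simpa using ht)
  simpa [iteratedFDeriv_one_apply] using this

end Line

theorem adaptive_decrease_general {n : ℕ}
    (f : EuclideanSpace ℝ (Fin n) → ℝ) (hf : ContDiff ℝ 3 f)
    (hsc : ∀ (x h : EuclideanSpace ℝ (Fin n)),
      |iteratedFDeriv ℝ 3 f x ![h, h, h]| ≤
        2 * (iteratedFDeriv ℝ 2 f x ![h, h]) ^ ((3 : ℝ) / 2))
    (hconv : ∀ (x h : EuclideanSpace ℝ (Fin n)), h ≠ 0 →
      0 < iteratedFDeriv ℝ 2 f x ![h, h])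
    (x : EuclideanSpace ℝ (Fin n))
    (H : EuclideanSpace ℝ (Fin n) →L[ℝ] EuclideanSpace ℝ (Fin n))
    (hHpos : ∀ v : EuclideanSpace ℝ (Fin n), v ≠ 0 → 0 < ⟪H v, v⟫)
    (d : EuclideanSpace ℝ (Fin n)) (hd : d = -(H (gradient f x))) (hd0 : d ≠ 0)
    (ρ δ η t : ℝ)
    (hρ : ρ = ⟪gradient f x, H (gradient f x)⟫)
    (hδ : δ = Real.sqrt (iteratedFDeriv ℝ 2 f x ![d, d]))
    (hη : η = ρ / δ) (ht : t = ρ / ((ρ + δ) * δ)) :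
    f (x + t • d) ≤ f x - (η - Real.log (1 + η)) := by
  have hgrad : gradient f x ≠ 0 := fun h => hd0 (by rw [hd, h, map_zero, neg_zero])
  have hρ0 : 0 < ρ := by rw [hρ, real_inner_comm]; exact hHpos _ hgrad
  have hδ0 : 0 < δ := hδ ▸ sqrt_pos.2 (hconv x d hd0)
  have hslope : fderiv ℝ f x d = -ρ := by
    rw [← inner_gradient_left, hd, inner_neg_right, hρ]
  have htδ : t * δ = ρ / (ρ + δ) := by rw [ht]; field_simp
  have key := le_sub_log_of_selfConcordant_along hf (fun y => hsc y d) (fun y => hconv y d hd0)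
    (t := t) (by rw [ht]; positivity)
    (by rw [← hδ, htδ, div_lt_one (by positivity)]; linarith)
  rw [← hδ, hslope] at key
  have hdecrease : -ρ * t - t * δ = -η := by rw [ht, hη]; field_simp; ring
  have hlog : log (1 - t * δ) = -log (1 + η) := by
    rw [htδ, hη, ← log_inv]; congr 1; field_simp; ring
  linarith

theorem adaptive_decrease {n : ℕ}
    (f : EuclideanSpace ℝ (Fin n) → ℝ) (hf : ContDiff ℝ 3 f)
    (hsc : ∀ (x h : EuclideanSpace ℝ (Fin n)),
      |iteratedFDeriv ℝ 3 f x ![h, h, h]| ≤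
        2 * (iteratedFDeriv ℝ 2 f x ![h, h]) ^ ((3 : ℝ) / 2))
    (hconv : ∀ (x h : EuclideanSpace ℝ (Fin n)), h ≠ 0 →
      0 < iteratedFDeriv ℝ 2 f x ![h, h])
    (x : EuclideanSpace ℝ (Fin n))
    (H : EuclideanSpace ℝ (Fin n) →L[ℝ] EuclideanSpace ℝ (Fin n))
    (hHsym : ∀ u v : EuclideanSpace ℝ (Fin n), ⟪H u, v⟫ = ⟪u, H v⟫)
    (hHpos : ∀ v : EuclideanSpace ℝ (Fin n), v ≠ 0 → 0 < ⟪H v, v⟫)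
    (d : EuclideanSpace ℝ (Fin n)) (hd : d = -(H (gradient f x))) (hd0 : d ≠ 0)
    (ρ δ η t : ℝ)
    (hρ : ρ = ⟪gradient f x, H (gradient f x)⟫)
    (hδ : δ = Real.sqrt (iteratedFDeriv ℝ 2 f x ![d, d]))
    (hη : η = ρ / δ) (ht : t = ρ / ((ρ + δ) * δ)) :
    f (x + t • d) ≤ f x - (η - Real.log (1 + η)) :=
  adaptive_decrease_general f hf hsc hconv x H hHpos d hd hd0 ρ δ η t hρ hδ hη ht
end

section
/- Let ρ > 0, δ > 0, η = ρ/δ, and t = ρ/((ρ+δ)δ). Then δ²t/(1 + δt) = ρ/(1 + 2η). Consequently, if f is standard self-concordant and strictly convex with d = -H∇f(x), ρ = -∇f(x)ᵀd, δ = ‖d‖ₓ, then ∇f(x+td)ᵀd - ∇f(x)ᵀd ≥ ρ/(1+2η), so the Wolfe condition ∇f(x+td)ᵀd ≥ c₂∇f(x)ᵀd holds whenever 1/(1+2η) ≥ 1 - c₂. -/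
open Real
open scoped RealInnerProductSpace

/-!
Along the line `s ↦ x + s • d` put `φ s = f (x + s • d)` and `q = φ''`. Self-concordance
reads `|q'| ≤ 2 q ^ (3/2)`, i.e. `q ^ (-1/2)` grows with slope at most `1`. Hence
`q s ≥ δ² / (1 + δ s)²` with `δ² = q 0`, and integrating once more gives
`φ' t - φ' 0 ≥ δ² t / (1 + δ t)`. For the adaptive step `t = ρ / ((ρ + δ) δ)` this gain
is `ρ / (1 + 2η)`, and since `φ' 0 = -ρ` the curvature condition follows from
`1 / (1 + 2η) ≥ 1 - c₂`.
-/

section SelfConcordantLine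

variable {q r : ℝ → ℝ}

lemma rpow_neg_half_le_add_of_self_concordant
    (hq : ∀ s, HasDerivAt q (r s) s) (hpos : ∀ s, 0 < q s)
    (hsc : ∀ s, |r s| ≤ 2 * q s ^ ((3 : ℝ) / 2)) {s : ℝ} (hs : 0 ≤ s) :
    q s ^ (-(1 / 2) : ℝ) ≤ q 0 ^ (-(1 / 2) : ℝ) + s := by
  have hderiv : ∀ u, HasDerivAt (fun u => q u ^ (-(1 / 2) : ℝ) - u)
      (r u * (-(1 / 2)) * q u ^ (-(1 / 2) - 1 : ℝ) - 1) u := fun u =>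
    ((hq u).rpow_const (Or.inl (hpos u).ne')).sub (hasDerivAt_id u)
  have hderiv_nonpos : ∀ u, r u * (-(1 / 2)) * q u ^ (-(1 / 2) - 1 : ℝ) - 1 ≤ 0 := by
    intro u
    have hcancel : q u ^ ((3 : ℝ) / 2) * q u ^ (-(1 / 2) - 1 : ℝ) = 1 := by
      rw [← rpow_add (hpos u)]; norm_num
    have hq' : 0 < q u ^ (-(1 / 2) - 1 : ℝ) := rpow_pos_of_pos (hpos u) _
    nlinarith [neg_abs_le (r u), hsc u]
  linarith [antitone_of_hasDerivAt_nonpos hderiv hderiv_nonpos hs]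

lemma div_one_add_sqrt_mul_sq_le_of_self_concordant
    (hq : ∀ s, HasDerivAt q (r s) s) (hpos : ∀ s, 0 < q s)
    (hsc : ∀ s, |r s| ≤ 2 * q s ^ ((3 : ℝ) / 2)) {s : ℝ} (hs : 0 ≤ s) :
    q 0 / (1 + √(q 0) * s) ^ 2 ≤ q s := by
  have hδ : 0 < √(q 0) := sqrt_pos.2 (hpos 0)
  have hinv_sqrt : ∀ u, q u ^ (-(1 / 2) : ℝ) = (√(q u))⁻¹ := fun u => by
    rw [rpow_neg (hpos u).le, sqrt_eq_rpow]
  have hle : (√(q s))⁻¹ ≤ (1 + √(q 0) * s) / √(q 0) := by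
    have := rpow_neg_half_le_add_of_self_concordant hq hpos hsc hs
    rw [hinv_sqrt, hinv_sqrt] at this
    rwa [add_div, mul_div_cancel_left₀ _ hδ.ne', one_div]
  have hsq := pow_le_pow_left₀ (inv_pos.2 (sqrt_pos.2 (hpos s))).le hle 2
  rw [inv_pow, sq_sqrt (hpos s).le, div_pow, sq_sqrt (hpos 0).le] at hsq
  calc q 0 / (1 + √(q 0) * s) ^ 2 = ((1 + √(q 0) * s) ^ 2 / q 0)⁻¹ := (inv_div _ _).symm
    _ ≤ (q s)⁻¹⁻¹ := inv_anti₀ (inv_pos.2 (hpos s)) hsq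
    _ = q s := inv_inv _

lemma mul_div_one_add_sqrt_mul_le_sub_of_self_concordant {g : ℝ → ℝ}
    (hg : ∀ s, HasDerivAt g (q s) s) (hq : ∀ s, HasDerivAt q (r s) s)
    (hpos : ∀ s, 0 < q s) (hsc : ∀ s, |r s| ≤ 2 * q s ^ ((3 : ℝ) / 2))
    {t : ℝ} (ht : 0 ≤ t) :
    q 0 * t / (1 + √(q 0) * t) ≤ g t - g 0 := by
  set δ := √(q 0)
  have hden : ∀ s ∈ Set.Ici (0 : ℝ), 0 < 1 + δ * s := fun s hs => by
    have : 0 ≤ s := hs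
    positivity
  have hderiv : ∀ s ∈ Set.Ici (0 : ℝ),
      HasDerivAt (fun s => g s - q 0 * s / (1 + δ * s)) (q s - q 0 / (1 + δ * s) ^ 2) s := by
    intro s hs
    have hquot := ((hasDerivAt_id' s).const_mul (q 0)).div
      (((hasDerivAt_id' s).const_mul δ).const_add 1) (hden s hs).ne'
    exact ((hg s).sub hquot).congr_deriv (by ring)
  have hmono : MonotoneOn (fun s => g s - q 0 * s / (1 + δ * s)) (Set.Ici 0) := by
    refine monotoneOn_of_hasDerivWithinAt_nonneg (convex_Ici 0)
      (fun s hs => (hderiv s hs).continuousAt.continuousWithinAt)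
      (fun s hs => (hderiv s (interior_subset hs)).hasDerivWithinAt) fun s hs => ?_
    rw [interior_Ici] at hs
    exact sub_nonneg.2 (div_one_add_sqrt_mul_sq_le_of_self_concordant hq hpos hsc hs.le)
  have := hmono Set.self_mem_Ici ht ht
  simp only [mul_zero, zero_div, sub_zero] at this
  linarith

end SelfConcordantLine

section Line

variable {E F : Type*} [NormedAddCommGroup E] [NormedSpace ℝ E]
  [NormedAddCommGroup F] [NormedSpace ℝ F]

lemma hasDerivAt_iteratedFDeriv_apply_line {f : E → F} {k : ℕ} (hf : ContDiff ℝ (k + 1) f)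
    (x d : E) (m : Fin k → E) (s : ℝ) :
    HasDerivAt (fun s : ℝ => iteratedFDeriv ℝ k f (x + s • d) m)
      (iteratedFDeriv ℝ (k + 1) f (x + s • d) (Fin.cons d m)) s := by
  have hline : HasDerivAt (fun s : ℝ => x + s • d) d s :=
    ((hasDerivAt_id' s).smul_const d).const_add x |>.congr_deriv (one_smul ℝ d)
  have hderiv_iter : HasFDerivAt (iteratedFDeriv ℝ k f)
      (fderiv ℝ (iteratedFDeriv ℝ k f) (x + s • d)) (x + s • d) :=
    (hf.iteratedFDeriv_right (m := 1) (add_comm _ _).le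
      |>.differentiable one_ne_zero _).hasFDerivAt
  rw [iteratedFDeriv_succ_apply_left, Fin.cons_zero, Fin.tail_cons]
  exact (ContinuousMultilinearMap.apply ℝ (fun _ : Fin k => E) F m).hasFDerivAt.comp _
    hderiv_iter |>.comp_hasDerivAt s hline

lemma mul_div_one_add_sqrt_mul_le_fderiv_sub {f : E → ℝ} (hf : ContDiff ℝ 3 f) {x d : E}
    (hsc : ∀ y, |iteratedFDeriv ℝ 3 f y ![d, d, d]| ≤
      2 * (iteratedFDeriv ℝ 2 f y ![d, d]) ^ ((3 : ℝ) / 2))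
    (hpos : ∀ y, 0 < iteratedFDeriv ℝ 2 f y ![d, d]) {t : ℝ} (ht : 0 ≤ t) :
    iteratedFDeriv ℝ 2 f x ![d, d] * t / (1 + √(iteratedFDeriv ℝ 2 f x ![d, d]) * t) ≤
      fderiv ℝ f (x + t • d) d - fderiv ℝ f x d := by
  have hg : ∀ s : ℝ, HasDerivAt (fun s => fderiv ℝ f (x + s • d) d)
      (iteratedFDeriv ℝ 2 f (x + s • d) ![d, d]) s := fun s => by
    have h := hasDerivAt_iteratedFDeriv_apply_line (k := 1) (hf.of_le (by norm_num)) x d ![d] s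
    simp only [iteratedFDeriv_one_apply, Matrix.cons_val_zero] at h
    exact h
  have hq : ∀ s : ℝ, HasDerivAt (fun s => iteratedFDeriv ℝ 2 f (x + s • d) ![d, d])
      (iteratedFDeriv ℝ 3 f (x + s • d) ![d, d, d]) s :=
    hasDerivAt_iteratedFDeriv_apply_line hf x d ![d, d]
  simpa only [zero_smul, add_zero] using
    mul_div_one_add_sqrt_mul_le_sub_of_self_concordant hg hq (fun _ => hpos _) (fun _ => hsc _) ht

end Line

lemma sq_mul_div_one_add_mul_eq_div_one_add_two_mul {ρ δ t : ℝ} (hρ : 0 < ρ) (hδ : 0 < δ)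
    (ht : t = ρ / ((ρ + δ) * δ)) : δ ^ 2 * t / (1 + δ * t) = ρ / (1 + 2 * (ρ / δ)) := by
  subst ht
  field_simp
  ring

theorem wolfe_condition_adaptive_general {n : ℕ}
    (f : EuclideanSpace ℝ (Fin n) → ℝ) (hf : ContDiff ℝ 3 f)
    (hsc : ∀ (x h : EuclideanSpace ℝ (Fin n)),
      |iteratedFDeriv ℝ 3 f x ![h, h, h]| ≤
        2 * (iteratedFDeriv ℝ 2 f x ![h, h]) ^ ((3 : ℝ) / 2))
    (hconv : ∀ (x h : EuclideanSpace ℝ (Fin n)), h ≠ 0 →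
      0 < iteratedFDeriv ℝ 2 f x ![h, h])
    (x : EuclideanSpace ℝ (Fin n))
    (H : EuclideanSpace ℝ (Fin n) →L[ℝ] EuclideanSpace ℝ (Fin n))
    (hHpos : ∀ v : EuclideanSpace ℝ (Fin n), v ≠ 0 → 0 < ⟪H v, v⟫)
    (d : EuclideanSpace ℝ (Fin n)) (hd : d = -(H (gradient f x))) (hd0 : d ≠ 0)
    (ρ δ η t : ℝ)
    (hρ : ρ = -⟪gradient f x, d⟫)
    (hδ : δ = Real.sqrt (iteratedFDeriv ℝ 2 f x ![d, d]))
    (hη : η = ρ / δ) (ht : t = ρ / ((ρ + δ) * δ)) :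
    δ ^ 2 * t / (1 + δ * t) = ρ / (1 + 2 * η) ∧
    ⟪gradient f (x + t • d), d⟫ - ⟪gradient f x, d⟫ ≥ ρ / (1 + 2 * η) ∧
    ∀ c₂ : ℝ, 0 < c₂ → c₂ < 1 → 1 / (1 + 2 * η) ≥ 1 - c₂ →
      ⟪gradient f (x + t • d), d⟫ ≥ c₂ * ⟪gradient f x, d⟫ := by
  have hgrad : gradient f x ≠ 0 := fun h0 => hd0 (by rw [hd, h0, map_zero, neg_zero])
  have hρ_pos : 0 < ρ := by
    rw [hρ, hd, inner_neg_right, neg_neg, real_inner_comm]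
    exact hHpos _ hgrad
  have hD2 : 0 < iteratedFDeriv ℝ 2 f x ![d, d] := hconv x d hd0
  have hδ_pos : 0 < δ := hδ ▸ sqrt_pos.2 hD2
  have hgain_eq : δ ^ 2 * t / (1 + δ * t) = ρ / (1 + 2 * η) :=
    hη ▸ sq_mul_div_one_add_mul_eq_div_one_add_two_mul hρ_pos hδ_pos ht
  have hgain : ⟪gradient f (x + t • d), d⟫ - ⟪gradient f x, d⟫ ≥ ρ / (1 + 2 * η) := by
    rw [← hgain_eq, inner_gradient_left, inner_gradient_left, hδ, sq_sqrt hD2.le]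
    exact mul_div_one_add_sqrt_mul_le_fderiv_sub hf (fun y => hsc y d)
      (fun y => hconv y d hd0) (by rw [ht]; positivity)
  refine ⟨hgain_eq, hgain, fun c₂ _ _ hc => ?_⟩
  have hgain_ge : ρ * (1 - c₂) ≤ ρ / (1 + 2 * η) := by
    rw [div_eq_mul_one_div]
    exact mul_le_mul_of_nonneg_left hc hρ_pos.le
  have hslope : ⟪gradient f x, d⟫ = -ρ := by rw [hρ, neg_neg]
  rw [hslope] at hgain ⊢
  linarith

theorem wolfe_condition_adaptive {n : ℕ}
    (f : EuclideanSpace ℝ (Fin n) → ℝ) (hf : ContDiff ℝ 3 f)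
    (hsc : ∀ (x h : EuclideanSpace ℝ (Fin n)),
      |iteratedFDeriv ℝ 3 f x ![h, h, h]| ≤
        2 * (iteratedFDeriv ℝ 2 f x ![h, h]) ^ ((3 : ℝ) / 2))
    (hconv : ∀ (x h : EuclideanSpace ℝ (Fin n)), h ≠ 0 →
      0 < iteratedFDeriv ℝ 2 f x ![h, h])
    (x : EuclideanSpace ℝ (Fin n))
    (H : EuclideanSpace ℝ (Fin n) →L[ℝ] EuclideanSpace ℝ (Fin n))
    (hHsym : ∀ u v : EuclideanSpace ℝ (Fin n), ⟪H u, v⟫ = ⟪u, H v⟫)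
    (hHpos : ∀ v : EuclideanSpace ℝ (Fin n), v ≠ 0 → 0 < ⟪H v, v⟫)
    (d : EuclideanSpace ℝ (Fin n)) (hd : d = -(H (gradient f x))) (hd0 : d ≠ 0)
    (ρ δ η t : ℝ)
    (hρ : ρ = -⟪gradient f x, d⟫)
    (hδ : δ = Real.sqrt (iteratedFDeriv ℝ 2 f x ![d, d]))
    (hη : η = ρ / δ) (ht : t = ρ / ((ρ + δ) * δ)) :
    δ ^ 2 * t / (1 + δ * t) = ρ / (1 + 2 * η) ∧
    ⟪gradient f (x + t • d), d⟫ - ⟪gradient f x, d⟫ ≥ ρ / (1 + 2 * η) ∧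
    ∀ c₂ : ℝ, 0 < c₂ → c₂ < 1 → 1 / (1 + 2 * η) ≥ 1 - c₂ →
      ⟪gradient f (x + t • d), d⟫ ≥ c₂ * ⟪gradient f x, d⟫ :=
  wolfe_condition_adaptive_general f hf hsc hconv x H hHpos d hd hd0 ρ δ η t hρ hδ hη ht
end
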